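/- arXiv:2203.13391 — 2 statements merged into one kernel-verified Lean document; each statement's English description precedes it below -/
import Mathlib

section
/- With the hypotheses of the Zermelo construction ($h_0(W,W)<1$, $\alpha = 1 - h_0(W,W)$), the function $Z(v) = \sqrt{\tfrac{1}{\alpha} h_0(v,v) + \tfrac{1}{\alpha^2} h_0(W,v)^2} - \tfrac{1}{\alpha} h_0(W,v)$ is of Randers type: there exist a positive definite symmetric bilinear form $\tilde h$ and a linear form $\tilde\omega$ on $V$ with $\tilde h(\tilde\omega^\sharp, \tilde\omega^\sharp) < 1$ (the $\tilde h$-norm of $\tilde\omega$ is less than 1) such that $Z(v) = \sqrt{\tilde h(v,v)} + \tilde\omega(v)$ for all $v \in V$. -/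
/-- The Zermelo metric built from navigation data `(h₀, W)` with mild wind
(`h₀(W,W) < 1`) is a Randers norm. -/
theorem zermelo_is_randers {V : Type*} [AddCommGroup V] [Module ℝ V]
    [FiniteDimensional ℝ V]
    (h0 : V →ₗ[ℝ] V →ₗ[ℝ] ℝ)
    (h0symm : ∀ u v : V, h0 u v = h0 v u)
    (h0pos : ∀ v : V, v ≠ 0 → 0 < h0 v v)
    (W : V) (hW : h0 W W < 1)
    (α : ℝ) (hα : α = 1 - h0 W W) :
    ∃ (ht : V →ₗ[ℝ] V →ₗ[ℝ] ℝ) (ωt : V →ₗ[ℝ] ℝ),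
      (∀ u v : V, ht u v = ht v u) ∧
      (∀ v : V, v ≠ 0 → 0 < ht v v) ∧
      (∃ w : V, (∀ v : V, ωt v = ht w v) ∧ ht w w < 1) ∧
      (∀ v : V,
        Real.sqrt ((1 / α) * h0 v v + (1 / α ^ 2) * (h0 W v) ^ 2)
          - (1 / α) * h0 W v
        = Real.sqrt (ht v v) + ωt v) := by
  have hWW : 0 ≤ h0 W W := by
    rcases eq_or_ne W 0 with h | h
    · simp [h]
    · exact (h0pos W h).le
  have hαpos : 0 < α := by rw [hα]; linarith
  have hα' : α ≠ 0 := hαpos.ne'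
  refine ⟨(1/α) • h0 + (1/α^2) • ((h0 W).smulRight (h0 W)),
    (-(1/α)) • (h0 W), ?_, ?_, ?_, ?_⟩
  · intro u v
    simp only [LinearMap.add_apply, LinearMap.smul_apply, LinearMap.smulRight_apply,
      smul_eq_mul]
    rw [h0symm u v]
    ring
  · intro v hv
    simp only [LinearMap.add_apply, LinearMap.smul_apply, LinearMap.smulRight_apply,
      smul_eq_mul]
    have h1 : 0 < (1/α) * (h0 v v) := by
      have := h0pos v hv
      positivity
    have h2 : 0 ≤ (1/α^2) * (h0 W v * h0 W v) :=
      mul_nonneg (by positivity) (mul_self_nonneg _)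
    linarith
  · have hsm : ∀ v : V, h0 ((-α) • W) v = (-α) * h0 W v := by
      intro v
      have := congrArg (fun f : V →ₗ[ℝ] ℝ => f v) (map_smul h0 (-α) W)
      simpa using this
    refine ⟨(-α) • W, fun v => ?_, ?_⟩
    · simp only [LinearMap.add_apply, LinearMap.smul_apply, LinearMap.smulRight_apply,
        smul_eq_mul, hsm, map_smul]
      rw [hα]
      have h1 : (1:ℝ) - h0 W W ≠ 0 := by rw [← hα]; exact hα'
      field_simp
      ring
    · simp only [LinearMap.add_apply, LinearMap.smul_apply, LinearMap.smulRight_apply,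
        smul_eq_mul, hsm, map_smul]
      have key : -α * (-α * (1/α * h0 W W + 1/α^2 * (h0 W W * h0 W W)))
          = α * h0 W W + (h0 W W)^2 := by field_simp
      rw [key]
      nlinarith
  · intro v
    simp only [LinearMap.add_apply, LinearMap.smul_apply, LinearMap.smulRight_apply,
      smul_eq_mul, neg_mul]
    ring_nf
end

section
/- The Fermat metric of a standard stationary scalar product with data $(\Lambda, \omega, g_0)$, namely $F(v) = \tfrac{1}{\Lambda}\omega(v) + \sqrt{\tfrac{1}{\Lambda^2}\omega(v)^2 + \tfrac{1}{\Lambda} g_0(v,v)}$, equals the Zermelo metric $Z(v) = \sqrt{\tfrac{1}{\alpha} h_0(v,v) + \tfrac{1}{\alpha^2} h_0(W,v)^2} - \tfrac{1}{\alpha} h_0(W,v)$ with navigation data determined by $\omega = -g_0(W, \cdot)$ and $h_0 = \tfrac{1}{\Lambda + \|\omega\|_0^2}\, g_0$, where $\alpha = 1 - h_0(W,W)$ and $\|\omega\|_0$ is the $g_0$-norm of $\omega$. -/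
/-! The Zermelo metric is unchanged when the navigation metric `h` and the constant `α` are
rescaled by the same nonzero factor, since it only involves `h / α`. Here `α = Λ / (Λ + g₀(W,W))`
and `h₀ = g₀ / (Λ + g₀(W,W))`, so the Zermelo metric of `(h₀, W, α)` is that of `(g₀, W, Λ)`,
which is the Fermat metric once `ω = -g₀(W,·)` is substituted. -/

section

variable {V : Type*}

noncomputable def fermatMetric (Λ : ℝ) (ω : V → ℝ) (g : V → V → ℝ) (v : V) : ℝ :=
  (1 / Λ) * ω v + Real.sqrt ((1 / Λ ^ 2) * (ω v) ^ 2 + (1 / Λ) * g v v)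

noncomputable def zermeloMetric (α : ℝ) (h : V → V → ℝ) (W v : V) : ℝ :=
  Real.sqrt ((1 / α) * h v v + (1 / α ^ 2) * (h W v) ^ 2) - (1 / α) * h W v

theorem zermeloMetric_mul_left {c : ℝ} (hc : c ≠ 0) (α : ℝ) (h : V → V → ℝ) (W v : V) :
    zermeloMetric (c * α) (fun u w => c * h u w) W v = zermeloMetric α h W v := by
  have scale : ∀ x, 1 / (c * α) * (c * x) = 1 / α * x := fun x => by
    rw [one_div_mul_eq_div, mul_div_mul_left _ _ hc, one_div_mul_eq_div]
  have scale_sq : ∀ x, 1 / (c * α) ^ 2 * (c * x) ^ 2 = 1 / α ^ 2 * x ^ 2 := fun x => by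
    rw [← one_div_pow, ← mul_pow, scale, mul_pow, one_div_pow]
  simp only [zermeloMetric, scale, scale_sq]

theorem fermatMetric_eq_zermeloMetric (Λ : ℝ) {ω : V → ℝ} {g : V → V → ℝ} {W : V}
    (hω : ∀ v, ω v = -g W v) (v : V) :
    fermatMetric Λ ω g v = zermeloMetric Λ g W v := by
  unfold fermatMetric zermeloMetric
  rw [hω, neg_sq, add_comm ((1 / Λ ^ 2) * _)]
  ring

end

theorem fermat_eq_zermelo_general {V : Type*} [AddCommGroup V] [Module ℝ V]
    (Λ : ℝ) (hΛ : 0 < Λ)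
    (g0 : V →ₗ[ℝ] V →ₗ[ℝ] ℝ)
    (g0pos : ∀ v : V, v ≠ 0 → 0 < g0 v v)
    (ω : V →ₗ[ℝ] ℝ) (W : V)
    (hω : ∀ v : V, ω v = -(g0 W v))
    (h0 : V → V → ℝ)
    (hh0 : ∀ u v : V, h0 u v = (1 / (Λ + g0 W W)) * g0 u v)
    (α : ℝ) (hα : α = 1 - h0 W W) :
    ∀ v : V,
      (1 / Λ) * ω v + Real.sqrt ((1 / Λ ^ 2) * (ω v) ^ 2 + (1 / Λ) * g0 v v)
        = Real.sqrt ((1 / α) * h0 v v + (1 / α ^ 2) * (h0 W v) ^ 2)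
            - (1 / α) * h0 W v := by
  intro v
  have hWW : 0 ≤ g0 W W := by
    rcases eq_or_ne W 0 with rfl | hW
    · simp
    · exact (g0pos W hW).le
  have hc : 1 / (Λ + g0 W W) ≠ 0 := by positivity
  have hα' : α = 1 / (Λ + g0 W W) * Λ := by
    rw [hα, hh0]
    field_simp
    ring
  have hh0' : h0 = fun u w => 1 / (Λ + g0 W W) * g0 u w := funext₂ hh0
  change fermatMetric Λ ω (fun u w => g0 u w) v = zermeloMetric α h0 W v
  rw [hα', hh0', zermeloMetric_mul_left hc, fermatMetric_eq_zermeloMetric Λ hω]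

/-- The Fermat metric of a standard stationary scalar product with data
`(Λ, ω, g₀)` equals the Zermelo metric with navigation data `(h₀, W)` given by
`ω = -g₀(W,·)` and `h₀ = g₀ / (Λ + ‖ω‖₀²)`, where `‖ω‖₀² = g₀(W,W)` and
`α = 1 - h₀(W,W)`. -/
theorem fermat_eq_zermelo {V : Type*} [AddCommGroup V] [Module ℝ V]
    [FiniteDimensional ℝ V]
    (Λ : ℝ) (hΛ : 0 < Λ)
    (g0 : V →ₗ[ℝ] V →ₗ[ℝ] ℝ)
    (g0symm : ∀ u v : V, g0 u v = g0 v u)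
    (g0pos : ∀ v : V, v ≠ 0 → 0 < g0 v v)
    (ω : V →ₗ[ℝ] ℝ) (W : V)
    (hω : ∀ v : V, ω v = -(g0 W v))
    (h0 : V → V → ℝ)
    (hh0 : ∀ u v : V, h0 u v = (1 / (Λ + g0 W W)) * g0 u v)
    (α : ℝ) (hα : α = 1 - h0 W W) :
    ∀ v : V,
      (1 / Λ) * ω v + Real.sqrt ((1 / Λ ^ 2) * (ω v) ^ 2 + (1 / Λ) * g0 v v)
        = Real.sqrt ((1 / α) * h0 v v + (1 / α ^ 2) * (h0 W v) ^ 2)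
            - (1 / α) * h0 W v :=
  fermat_eq_zermelo_general Λ hΛ g0 g0pos ω W hω h0 hh0 α hα
end
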